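/- arXiv:1608.01562 — 2 statements merged into one kernel-verified Lean document; each statement's English description precedes it below -/
import Mathlib

section
/- For b ≥ 1, the generating function of supporting (n,b)-domino towers is G_b(x) = Σ_{n≥0} g_b(n) x^n = Σ_{i=1}^{b−1} Π_{j=1}^{i} x^{b−j}/(1−x^{b−j}) (as formal power series). -/
/-- `gFun b n` is the number of supporting `(n,b)`-domino towers, defined by the recurrence
`g_b(n) = g_b(n-b+1) + g_{b-1}(n-b+1)` with `g_b(b-1) = 1` for `b ≥ 2` and
`g_b(n) = 0` for `n < 1`, `b < 2`, or `n < b - 1`. -/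
def gFun : ℕ → ℕ → ℕ
  | b, n =>
    if h : b < 2 ∨ n + 1 < b then 0
    else if h' : n + 1 = b then 1
    else gFun b (n + 1 - b) + gFun (b - 1) (n + 1 - b)
termination_by b n => n
decreasing_by all_goals omega

/-!
The recurrence for `g_{b+1}` says exactly that its generating function satisfies
`G_{b+1} = x^b (1 + G_b + G_{b+1})`, i.e. `G_{b+1} = x^b/(1-x^b) · (1 + G_b)`.
Starting from `G_1 = 0`, the sum of products on the right-hand side obeys the same recursion,
because every product in it begins with the factor for `j = 1`.
-/

open PowerSeries Finset

@[to_additive]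
lemma prod_Icc_eq_prod_range {M : Type*} [CommMonoid M] (f : ℕ → M) (m n : ℕ) :
    ∏ j ∈ Icc m n, f j = ∏ j ∈ range (n + 1 - m), f (m + j) := by
  rw [← Ico_add_one_right_eq_Icc, prod_Ico_eq_prod_range]

section TowerSum

variable {R : Type*} [CommSemiring R] (f : ℕ → R)

def towerSum (b : ℕ) : R := ∑ i ∈ Icc 1 (b - 1), ∏ j ∈ Icc 1 i, f (b - j)

lemma towerSum_one : towerSum f 1 = 0 := by simp [towerSum]

lemma towerSum_succ_eq_sum_range (c : ℕ) :
    towerSum f (c + 1) = ∑ i ∈ range c, ∏ j ∈ range (i + 1), f (c - j) := by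
  simp only [towerSum, sum_Icc_eq_sum_range, prod_Icc_eq_prod_range, Nat.add_sub_cancel,
    add_comm 1, Nat.add_sub_add_right]

lemma towerSum_succ {b : ℕ} (hb : 1 ≤ b) : towerSum f (b + 1) = f b * (1 + towerSum f b) := by
  obtain ⟨c, rfl⟩ : ∃ c, b = c + 1 := ⟨b - 1, by omega⟩
  rw [towerSum_succ_eq_sum_range, towerSum_succ_eq_sum_range]
  conv_lhs => simp only [prod_range_succ', Nat.sub_zero, Nat.add_sub_add_right]
  rw [← sum_mul, mul_comm, sum_range_succ']
  simp [add_comm]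

end TowerSum

lemma gFun_one (n : ℕ) : gFun 1 n = 0 := by
  rw [gFun]; simp

lemma gFun_zero_right (b : ℕ) : gFun b 0 = 0 := by
  rw [gFun]; grind

lemma gFun_succ_eq_zero_of_lt {b n : ℕ} (h : n < b) : gFun (b + 1) n = 0 := by
  rw [gFun]; grind

lemma gFun_succ_self {b : ℕ} (hb : 1 ≤ b) : gFun (b + 1) b = 1 := by
  rw [gFun]; grind

lemma gFun_succ_eq_add_of_lt {b n : ℕ} (hb : 1 ≤ b) (h : b < n) :
    gFun (b + 1) n = gFun (b + 1) (n - b) + gFun b (n - b) := by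
  rw [gFun]; grind

section GenFun

variable (R : Type*)

noncomputable def gFunSeries [Semiring R] (b : ℕ) : R⟦X⟧ := mk fun n => (gFun b n : R)

lemma gFunSeries_one [Semiring R] : gFunSeries R 1 = 0 := by
  ext n; simp [gFunSeries, gFun_one]

lemma gFunSeries_succ [Semiring R] {b : ℕ} (hb : 1 ≤ b) :
    gFunSeries R (b + 1) = X ^ b * (1 + gFunSeries R b + gFunSeries R (b + 1)) := by
  ext n
  simp only [gFunSeries, coeff_X_pow_mul', coeff_mk, map_add, coeff_one]
  rcases lt_trichotomy n b with h | rfl | h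
  · simp [h, gFun_succ_eq_zero_of_lt h]
  · simp [gFun_succ_self hb, gFun_zero_right]
  · simp [h.le, (Nat.sub_pos_of_lt h).ne', gFun_succ_eq_add_of_lt hb h, add_comm]

lemma gFunSeries_succ_eq_mul_inv [Field R] {b : ℕ} (hb : 1 ≤ b) :
    gFunSeries R (b + 1) = X ^ b * (1 - X ^ b)⁻¹ * (1 + gFunSeries R b) := by
  have hunit : constantCoeff (1 - X ^ b : R⟦X⟧) ≠ 0 := by simp [zero_pow (by omega : b ≠ 0)]
  rw [mul_right_comm, eq_mul_inv_iff_mul_eq hunit]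
  linear_combination gFunSeries_succ R hb

end GenFun

open PowerSeries in
/-- For `b ≥ 1`, the generating function of supporting `(n,b)`-domino towers is
`G_b(x) = Σ_{n≥0} g_b(n) xⁿ = Σ_{i=1}^{b-1} Π_{j=1}^{i} x^{b-j}/(1-x^{b-j})`. -/
theorem supporting_tower_genFun (b : ℕ) (hb : 1 ≤ b) :
    PowerSeries.mk (fun n => (gFun b n : ℚ)) =
      ∑ i ∈ Finset.Icc 1 (b - 1), ∏ j ∈ Finset.Icc 1 i,
        ((X : PowerSeries ℚ) ^ (b - j) * (1 - (X : PowerSeries ℚ) ^ (b - j))⁻¹) := by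
  change gFunSeries ℚ b = towerSum (fun k => X ^ k * (1 - X ^ k)⁻¹) b
  induction b, hb using Nat.le_induction with
  | base => rw [gFunSeries_one, towerSum_one]
  | succ b hb ih => rw [gFunSeries_succ_eq_mul_inv ℚ hb, ih, towerSum_succ _ hb]
end

section
/- For every b ≥ 1, the denominator polynomial g_b(z) = (1−z^b)(1−2z^b) Π_{k=1}^{b−1} (1−z^k)^2 (1−2z^k) has z = 1/2 as a root of multiplicity exactly 1, and 1/2 is its unique root of smallest modulus. -/
open Polynomial

/-!
Every root of `g_b` is a root of some `1 - z^k` (modulus `1`) or `1 - 2z^k` (modulus `2^(-1/k)`)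
with `k ≥ 1`, and `2^(-1/k) ≤ 1/2` forces `k = 1`, whose only root is `1/2`. The factor `1 - 2z`
occurs exactly once in `g_b` (as `1 - 2z^b` if `b = 1`, as the `k = 1` factor of the product if
`b ≥ 2`), and root multiplicities add over products of nonzero polynomials.
-/

/-- The denominator polynomial
`g_b(z) = (1-z^b)(1-2z^b) Π_{k=1}^{b-1} (1-z^k)² (1-2z^k)` over `ℂ`. -/
noncomputable def gPoly (b : ℕ) : Polynomial ℂ :=
  (1 - X ^ b) * (1 - 2 * X ^ b) *
    ∏ k ∈ Finset.Icc 1 (b - 1), ((1 - X ^ k) ^ 2 * (1 - 2 * X ^ k))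

theorem Polynomial.rootMultiplicity_prod {R ι : Type*} [CommRing R] [IsDomain R] {s : Finset ι}
    {f : ι → R[X]} (h : ∏ i ∈ s, f i ≠ 0) (a : R) :
    rootMultiplicity a (∏ i ∈ s, f i) = ∑ i ∈ s, rootMultiplicity a (f i) := by
  classical
  simp only [← count_roots, roots_prod f s h, Multiset.count_bind, Finset.sum_eq_multiset_sum]

theorem Polynomial.rootMultiplicity_pow {R : Type*} [CommRing R] [IsDomain R] (p : R[X])
    (n : ℕ) (a : R) : rootMultiplicity a (p ^ n) = n * rootMultiplicity a p := by
  classical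
  simp only [← count_roots, roots_pow, Multiset.count_nsmul]

theorem norm_eq_one_of_isRoot_one_sub_X_pow {k : ℕ} (hk : k ≠ 0) {z : ℂ}
    (h : (1 - X ^ k : ℂ[X]).IsRoot z) : ‖z‖ = 1 := by
  simp only [IsRoot.def, eval_sub, eval_one, eval_pow, eval_X] at h
  exact Complex.norm_eq_one_of_pow_eq_one (by linear_combination -h) hk

theorem eq_half_of_isRoot_one_sub_two_mul_X_pow {k : ℕ} {z : ℂ}
    (h : (1 - 2 * X ^ k : ℂ[X]).IsRoot z) (hz : ‖z‖ ≤ 1 / 2) : k = 1 ∧ z = 1 / 2 := by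
  simp only [IsRoot.def, eval_sub, eval_one, eval_mul, eval_ofNat, eval_pow, eval_X] at h
  have hnorm : ‖z‖ ^ k = 1 / 2 := by
    rw [← norm_pow, show z ^ k = 1 / 2 by linear_combination -h / 2]
    norm_num
  obtain rfl : k = 1 := by
    rcases Nat.lt_or_ge k 2 with hk | hk
    · interval_cases k
      · norm_num at hnorm
      · rfl
    · have : ‖z‖ ^ k ≤ ‖z‖ ^ 2 := pow_le_pow_of_le_one (norm_nonneg z) (by linarith) hk
      nlinarith [norm_nonneg z]
  exact ⟨rfl, by linear_combination -h / 2⟩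

theorem rootMultiplicity_half_one_sub_X_pow {k : ℕ} (hk : k ≠ 0) :
    rootMultiplicity (1 / 2 : ℂ) (1 - X ^ k) = 0 :=
  rootMultiplicity_eq_zero fun h => by
    have := norm_eq_one_of_isRoot_one_sub_X_pow hk h
    norm_num at this

theorem rootMultiplicity_half_one_sub_two_mul_X_pow (k : ℕ) :
    rootMultiplicity (1 / 2 : ℂ) (1 - 2 * X ^ k) = if k = 1 then 1 else 0 := by
  split_ifs with hk
  · have hfac : (1 - 2 * X ^ k : ℂ[X]) = C (-2) * (X - C (1 / 2)) := by
      rw [hk, pow_one, mul_sub, ← C_mul, C_neg, C_ofNat]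
      norm_num
      ring
    rw [hfac, rootMultiplicity_mul (by simp [X_sub_C_ne_zero]), rootMultiplicity_C,
      rootMultiplicity_X_sub_C_self, zero_add]
  · exact rootMultiplicity_eq_zero fun h =>
      hk (eq_half_of_isRoot_one_sub_two_mul_X_pow h (by norm_num)).1

theorem exists_isRoot_of_isRoot_gPoly {b : ℕ} (hb : b ≠ 0) {z : ℂ} (h : (gPoly b).IsRoot z) :
    ∃ k ≠ 0, (1 - X ^ k : ℂ[X]).IsRoot z ∨ (1 - 2 * X ^ k : ℂ[X]).IsRoot z := by
  simp only [gPoly, root_mul, isRoot_prod] at h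
  rcases h with (h | h) | ⟨k, hk, h | h⟩
  · exact ⟨b, hb, .inl h⟩
  · exact ⟨b, hb, .inr h⟩
  · exact ⟨k, by simp at hk; omega, .inl (by simpa using h)⟩
  · exact ⟨k, by simp at hk; omega, .inr h⟩

theorem gPoly_ne_zero {b : ℕ} (hb : b ≠ 0) : gPoly b ≠ 0 := fun h => by
  obtain ⟨k, hk, h0 | h0⟩ := exists_isRoot_of_isRoot_gPoly hb (z := 0) (by simp [h])
  · simpa using norm_eq_one_of_isRoot_one_sub_X_pow hk h0
  · simpa using (eq_half_of_isRoot_one_sub_two_mul_X_pow h0 (by simp)).2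

theorem rootMultiplicity_half_gPoly {b : ℕ} (hb : b ≠ 0) :
    (gPoly b).rootMultiplicity (1 / 2) = 1 := by
  have hne := gPoly_ne_zero hb
  have hprod := right_ne_zero_of_mul hne
  have hfactor : ∀ k ∈ Finset.Icc 1 (b - 1),
      rootMultiplicity (1 / 2 : ℂ) ((1 - X ^ k) ^ 2 * (1 - 2 * X ^ k)) = if k = 1 then 1 else 0 := by
    intro k hk
    rw [rootMultiplicity_mul (Finset.prod_ne_zero_iff.1 hprod k hk), rootMultiplicity_pow,
      rootMultiplicity_half_one_sub_X_pow (by simp at hk; omega),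
      rootMultiplicity_half_one_sub_two_mul_X_pow, mul_zero, zero_add]
  rw [gPoly] at hne ⊢
  rw [rootMultiplicity_mul hne, rootMultiplicity_mul (left_ne_zero_of_mul hne),
    rootMultiplicity_prod hprod, Finset.sum_congr rfl hfactor, Finset.sum_ite_eq',
    rootMultiplicity_half_one_sub_X_pow hb, rootMultiplicity_half_one_sub_two_mul_X_pow]
  simp only [Finset.mem_Icc]
  split_ifs <;> omega

/-- For every `b ≥ 1`, `z = 1/2` is a root of `g_b` of multiplicity exactly `1`, and it is
the unique root of smallest modulus: every other root has strictly larger modulus. -/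
theorem gPoly_half_root (b : ℕ) (hb : 1 ≤ b) :
    (gPoly b).rootMultiplicity (1 / 2 : ℂ) = 1 ∧
    ∀ z : ℂ, (gPoly b).IsRoot z → z ≠ 1 / 2 → (1 / 2 : ℝ) < ‖z‖ := by
  have hb0 : b ≠ 0 := Nat.one_le_iff_ne_zero.mp hb
  refine ⟨rootMultiplicity_half_gPoly hb0, fun z hz hne => ?_⟩
  by_contra! hle
  obtain ⟨k, hk, h | h⟩ := exists_isRoot_of_isRoot_gPoly hb0 hz
  · linarith [norm_eq_one_of_isRoot_one_sub_X_pow hk h]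
  · exact hne (eq_half_of_isRoot_one_sub_two_mul_X_pow h hle).2
end
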